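/- Let A be a ring such that the canonical map θ_A : (A*)_ab → K₁(A) is an isomorphism (e.g., A semilocal satisfying Vaserstein's condition). Then for every invertible matrix ξ over A, the generalized determinants agree under transposition: det_{A^op}(ξ^T) = det_A(ξ) in (A*)_ab = ((A^op)*)_ab. -/

import Mathlib

/-!
Transposition is an anti-homomorphism `GL(A) → GL(Aᵐᵒᵖ)`, so it induces a homomorphism
`K₁(A) → K₁(Aᵐᵒᵖ)`. It sends `diag(u, 1, 1, …)` to `diag(op u, 1, 1, …)`, hence
`θ_{Aᵐᵒᵖ}[op u] = [ξᵀ] = θ_{Aᵐᵒᵖ}[v]`, and injectivity of `θ_{Aᵐᵒᵖ}` gives `[op u] = [v]`.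

The transpose of `φ` is built as its adjoint for the pairing `⟨y, x⟩ = ∑ⱼ xⱼ yⱼ` between rows
over `Aᵐᵒᵖ` and columns over `A`; then `(φψ)ᵀ = ψᵀφᵀ` is immediate.
-/

/-- The stable (infinite) general linear group `GL(A) = ⋃ₙ GLₙ(A)`, realized as the group of
`A`-linear automorphisms of the free module `⊕_{i ∈ ℕ} A` that fix all but finitely many of
the standard basis vectors. -/
def stableGL (A : Type*) [Ring A] : Subgroup ((ℕ →₀ A) ≃ₗ[A] (ℕ →₀ A)) where
  carrier := {φ | ∃ N : ℕ, ∀ i ≥ N, φ (Finsupp.single i 1) = Finsupp.single i 1}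
  one_mem' := ⟨0, fun _ _ => rfl⟩
  mul_mem' := by
    rintro a b ⟨N, hN⟩ ⟨M, hM⟩
    exact ⟨max N M, fun i hi => by
      show a (b (Finsupp.single i 1)) = Finsupp.single i 1
      rw [hM i (le_trans (le_max_right N M) hi), hN i (le_trans (le_max_left N M) hi)]⟩
  inv_mem' := by
    rintro a ⟨N, hN⟩
    exact ⟨N, fun i hi => by
      show a.symm (Finsupp.single i 1) = Finsupp.single i 1
      rw [LinearEquiv.symm_apply_eq, hN i hi]⟩

/-- The classical K₁-group of a ring: `K₁(A) = GL(A)_ab`. -/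
abbrev K1 (A : Type*) [Ring A] := Abelianization (stableGL A)

open Finsupp MulOpposite

section RowPairing

variable {ι A : Type*} [Ring A]

noncomputable def rowPairing (y : ι →₀ Aᵐᵒᵖ) : (ι →₀ A) →ₗ[A] A :=
  linearCombination A fun j => unop (y j)

lemma rowPairing_single_one (y : ι →₀ Aᵐᵒᵖ) (k : ι) :
    rowPairing y (single k 1) = unop (y k) := by
  rw [rowPairing, linearCombination_single, one_smul]

lemma rowPairing_add (y y' : ι →₀ Aᵐᵒᵖ) (x : ι →₀ A) :
    rowPairing (y + y') x = rowPairing y x + rowPairing y' x := by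
  simp only [rowPairing, linearCombination_apply, Finsupp.add_apply, unop_add, smul_add,
    Finsupp.sum_add]

lemma rowPairing_smul (b : Aᵐᵒᵖ) (y : ι →₀ Aᵐᵒᵖ) (x : ι →₀ A) :
    rowPairing (b • y) x = rowPairing y x * unop b := by
  simp only [rowPairing, linearCombination_apply, Finsupp.smul_apply, smul_eq_mul, unop_mul,
    Finsupp.sum_mul, mul_assoc]

lemma rowPairing_single_one_left (i : ι) (x : ι →₀ A) :
    rowPairing (single i 1) x = x i := by
  have : rowPairing (single i (1 : Aᵐᵒᵖ)) = lapply i := by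
    ext k
    classical
    simp [rowPairing_single_one, single_apply, eq_comm, apply_ite unop]
  rw [this, lapply_apply]

end RowPairing

namespace stableGL

variable {A : Type*} [Ring A]

lemma ext_single_one {φ ψ : stableGL A}
    (h : ∀ k i, φ.1 (single k 1) i = ψ.1 (single k 1) i) : φ = ψ := by
  apply Subtype.ext
  apply LinearEquiv.toLinearMap_injective
  ext k i
  exact h k i

lemma support_rowPairing_apply_finite (φ : stableGL A) (y : ℕ →₀ Aᵐᵒᵖ) :
    (Function.support fun k => op (rowPairing y (φ.1 (single k 1)))).Finite := by
  obtain ⟨N, hN⟩ := φ.2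
  refine (y.support ∪ Finset.range N).finite_toSet.subset fun k hk => ?_
  simp only [Finset.coe_union, Set.mem_union, Finset.mem_coe, Finset.mem_range, mem_support_iff]
  by_contra! h
  simp [hN k h.2, rowPairing_single_one, h.1] at hk

noncomputable def transposeLin (φ : stableGL A) : (ℕ →₀ Aᵐᵒᵖ) →ₗ[Aᵐᵒᵖ] (ℕ →₀ Aᵐᵒᵖ) where
  toFun y := ofSupportFinite _ (support_rowPairing_apply_finite φ y)
  map_add' y y' := by ext k; simp [ofSupportFinite_coe, rowPairing_add]
  map_smul' b y := by ext k; simp [ofSupportFinite_coe, rowPairing_smul]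

lemma transposeLin_apply (φ : stableGL A) (y : ℕ →₀ Aᵐᵒᵖ) (k : ℕ) :
    transposeLin φ y k = op (rowPairing y (φ.1 (single k 1))) := rfl

lemma rowPairing_transposeLin (φ : stableGL A) (y : ℕ →₀ Aᵐᵒᵖ) (x : ℕ →₀ A) :
    rowPairing (transposeLin φ y) x = rowPairing y (φ.1 x) := by
  change rowPairing (transposeLin φ y) x = (rowPairing y ∘ₗ φ.1.toLinearMap) x
  congr 1
  ext k
  simp [rowPairing_single_one, transposeLin_apply]

lemma transposeLin_mul (φ ψ : stableGL A) :
    transposeLin (φ * ψ) = transposeLin ψ ∘ₗ transposeLin φ := by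
  ext y k
  simp [transposeLin_apply, rowPairing_transposeLin]

lemma transposeLin_one : transposeLin (1 : stableGL A) = LinearMap.id := by
  ext y k
  simp [transposeLin_apply, rowPairing_single_one]

lemma transposeLin_single_one_apply (φ : stableGL A) (i k : ℕ) :
    transposeLin φ (single i 1) k = op (φ.1 (single k 1) i) := by
  rw [transposeLin_apply, rowPairing_single_one_left]

lemma exists_transposeLin_single_one_eq (φ : stableGL A) :
    ∃ B, ∀ i ≥ B, transposeLin φ (single i 1) = single i 1 := by
  classical
  -- Beyond `N` the columns of `φ` are those of `1`, and the first `N` columns vanish beyond `M`.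
  obtain ⟨N, hN⟩ := φ.2
  obtain ⟨M, hM⟩ :=
    ((Finset.range N).biUnion fun k => (φ.1 (single k 1)).support).exists_nat_subset_range
  refine ⟨max N M, fun i hi => ?_⟩
  ext k
  rw [transposeLin_single_one_apply]
  rcases lt_or_ge k N with hk | hk
  · have hik : i ≠ k := by omega
    have hφ : φ.1 (single k 1) i = 0 := by
      by_contra h
      have := hM (Finset.mem_biUnion.mpr ⟨k, Finset.mem_range.mpr hk, mem_support_iff.mpr h⟩)
      simp only [Finset.mem_range] at this
      omega
    simp [hφ, hik]
  · simp [hN k hk, single_apply, eq_comm, apply_ite op]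

noncomputable def transpose : stableGL A →* (stableGL Aᵐᵒᵖ)ᵐᵒᵖ where
  toFun φ := op ⟨.ofLinearMap (transposeLin φ) (transposeLin φ⁻¹)
      (by rw [← transposeLin_mul, inv_mul_cancel, transposeLin_one])
      (by rw [← transposeLin_mul, mul_inv_cancel, transposeLin_one]),
    exists_transposeLin_single_one_eq φ⟩
  map_one' := by
    apply unop_injective
    ext k i
    simp [transposeLin_one]
  map_mul' φ ψ := by
    apply unop_injective
    ext k i
    simp [transposeLin_mul]

lemma transpose_single_one_apply (φ : stableGL A) (i k : ℕ) :
    (transpose φ).unop.1 (single i 1) k = op (φ.1 (single k 1) i) :=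
  transposeLin_single_one_apply φ i k

noncomputable def diagLin (d : ℕ → A) : (ℕ →₀ A) →ₗ[A] (ℕ →₀ A) :=
  linearCombination A fun i => single i (d i)

lemma diagLin_single (d : ℕ → A) (i : ℕ) (b : A) :
    diagLin d (single i b) = single i (b * d i) := by
  rw [diagLin, linearCombination_single, smul_single']

lemma diagLin_comp (d d' : ℕ → A) : diagLin d ∘ₗ diagLin d' = diagLin (d' * d) := by
  ext i
  simp [diagLin_single]

lemma diagLin_one : diagLin (1 : ℕ → A) = LinearMap.id := by
  ext i
  simp [diagLin_single]

noncomputable def unitDiag (u : Aˣ) : stableGL A :=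
  ⟨.ofLinearMap (diagLin (Pi.mulSingle 0 ↑u)) (diagLin (Pi.mulSingle 0 ↑u⁻¹))
      (by rw [diagLin_comp, ← Pi.mulSingle_mul, Units.inv_mul, Pi.mulSingle_one, diagLin_one])
      (by rw [diagLin_comp, ← Pi.mulSingle_mul, Units.mul_inv, Pi.mulSingle_one, diagLin_one]),
    1, fun i hi => by simp [diagLin_single, Pi.mulSingle_eq_of_ne (Nat.one_le_iff_ne_zero.mp hi)]⟩

lemma unitDiag_single_one (u : Aˣ) (i : ℕ) :
    (unitDiag u).1 (single i 1) = single i ((Pi.mulSingle 0 (u : A) : ℕ → A) i) := by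
  simp [unitDiag, diagLin_single]

lemma unitDiag_single_zero (u : Aˣ) : (unitDiag u).1 (single 0 1) = single 0 (u : A) := by
  simp [unitDiag_single_one]

lemma unitDiag_single_of_ne (u : Aˣ) (i : ℕ) (hi : i ≠ 0) :
    (unitDiag u).1 (single i 1) = single i 1 := by
  simp [unitDiag_single_one, hi]

lemma transpose_unitDiag (u : Aˣ) :
    (transpose (unitDiag u)).unop = unitDiag (Units.opEquiv.symm (op u)) := by
  refine ext_single_one fun k i => ?_
  rw [transpose_single_one_apply, unitDiag_single_one, unitDiag_single_one]
  rcases eq_or_ne k i with rfl | hki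
  · simp [Pi.mulSingle_apply, apply_ite op]
  · simp [hki, hki.symm]

end stableGL

noncomputable def K1.transpose (A : Type*) [Ring A] : K1 A →* K1 Aᵐᵒᵖ :=
  Abelianization.lift
    ((Abelianization.of.fromOpposite fun _ _ => .all _ _).comp stableGL.transpose)

lemma K1.transpose_of {A : Type*} [Ring A] (φ : stableGL A) :
    K1.transpose A (.of φ) = .of (stableGL.transpose φ).unop := rfl

noncomputable def unopUnitsAb (A : Type*) [Monoid A] :
    Abelianization Aᵐᵒᵖˣ →* Abelianization Aˣ :=
  Abelianization.lift
    ((Abelianization.of.fromOpposite fun _ _ => .all _ _).comp Units.opEquiv.toMonoidHom)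

open stableGL

theorem stmt_19 (A : Type*) [Ring A]
    (θA : Abelianization Aˣ →* K1 A)
    (θAop : Abelianization (Aᵐᵒᵖ)ˣ →* K1 Aᵐᵒᵖ)
    (hθA : ∀ (u : Aˣ) (φ : stableGL A),
      (φ.1 (Finsupp.single 0 1) = Finsupp.single 0 (u : A) ∧
        ∀ i : ℕ, i ≠ 0 → φ.1 (Finsupp.single i 1) = Finsupp.single i 1) →
      θA (Abelianization.of u) = Abelianization.of φ)
    (hθAop : ∀ (u : (Aᵐᵒᵖ)ˣ) (φ : stableGL Aᵐᵒᵖ),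
      (φ.1 (Finsupp.single 0 1) = Finsupp.single 0 (u : Aᵐᵒᵖ) ∧
        ∀ i : ℕ, i ≠ 0 → φ.1 (Finsupp.single i 1) = Finsupp.single i 1) →
      θAop (Abelianization.of u) = Abelianization.of φ)
    (hbijAop : Function.Bijective θAop)
    (ξ : stableGL A) (ξT : stableGL Aᵐᵒᵖ)
    (hT : ∀ i j : ℕ, (ξ.1 (Finsupp.single j 1)) i
        = MulOpposite.unop ((ξT.1 (Finsupp.single i 1)) j))
    (u : Aˣ) (v : (Aᵐᵒᵖ)ˣ)
    (hu : θA (Abelianization.of u) = Abelianization.of ξ)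
    (hv : θAop (Abelianization.of v) = Abelianization.of ξT) :
    Abelianization.of u = Abelianization.of (MulOpposite.unop (Units.opEquiv v)) := by
  set u' := Units.opEquiv.symm (op u)
  have hξT : (transpose ξ).unop = ξT :=
    ext_single_one fun k i => by rw [transpose_single_one_apply, hT, op_unop]
  have huv : Abelianization.of u' = Abelianization.of v := by
    apply hbijAop.injective
    rw [hv, hθAop u' _ ⟨unitDiag_single_zero u', unitDiag_single_of_ne u'⟩, ← transpose_unitDiag,
      ← K1.transpose_of, ← hθA u _ ⟨unitDiag_single_zero u, unitDiag_single_of_ne u⟩, hu,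
      K1.transpose_of, hξT]
  simpa [unopUnitsAb, u'] using congrArg (unopUnitsAb A) huv
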